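/- For $0 < y < 1$ and $0 < z < 1$, the function $g(y,z) = Li_2(1-yz) + Li_2(1) + \log\frac{y(1-z)}{y-1}\log(1-yz) - Li_2\left(\frac{y}{y-1}\right) + Li_2\left(\frac{1-yz}{z(1-y)}\right) - Li_2\left(\frac{1}{z}\right) + \log(1-y)\log(yz)$ satisfies $g(y,z) = Li_{1,1}(y,z) - Li_2(1-y) + 3\,Li_2(1)$, provided consistent branches are chosen; in particular, the derivative identity $\frac{\partial}{\partial y}\left[Li_2(1-yz) - Li_2\left(\frac{y}{y-1}\right) + Li_2\left(\frac{1-yz}{z(1-y)}\right) + \log\left(\frac{y(1-z)}{y-1}\right)\log(1-yz) + \log(1-y)\log(yz)\right] = \frac{\partial}{\partial y}\left[Li_{1,1}(y,z) - Li_2(1-y)\right]$ holds wherever all terms are defined and real-analytic. -/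

import Mathlib

/-- The real dilogarithm `Li₂(x) = -∫_0^x log(1-s)/s ds` (note that `Real.log`
is the logarithm of the absolute value, so this is the real-analytic
continuation for `x > 1` as well). -/
noncomputable def Li2R (x : ℝ) : ℝ := -∫ s in (0:ℝ)..x, Real.log (1 - s) / s

/-- The double logarithm `Li_{1,1}(y,z) = ∑_{0<j<k} y^j z^k/(jk)`. -/
noncomputable def Li11 (y z : ℝ) : ℝ :=
  ∑' p : ℕ × ℕ, if 0 < p.1 ∧ p.1 < p.2 then y ^ p.1 * z ^ p.2 / ((p.1 : ℝ) * (p.2 : ℝ)) else 0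

/-!
`Li2R` has derivative `-log(1-x)/x` away from `0` and `1` by the fundamental theorem of
calculus: the integrand is bounded near `0` (it is a difference quotient of `log (1 - s)`) and
has an integrable logarithmic singularity at `1`.

Summing over `j` first, `Li_{1,1}(t,z) = ∑_k z^k/k · ∑_{j<k} t^j/j`, a series that can be
differentiated termwise on `(-1,1)` since the `k`-th derivative is bounded by `|z|^k`.
As `(1-y) · y · ∑_{0<j<k} y^(j-1) = y - y^k`, the logarithm series gives
`∂_y Li_{1,1}(y,z) = (log(1-yz) - y log(1-z)) / (y(1-y))`.
Both sides of the identity then have the derivative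
`log(1-yz)/(y(1-y)) - (log y + log(1-z))/(1-y)`; on the left this is a direct computation
with the chain rule once the logarithms are split into `log y, log z, log(1-y), log(1-z)`.
-/

open Real

section Li2R

open Set MeasureTheory intervalIntegral

theorem intervalIntegrable_log_one_sub_div_of_lt {x : ℝ} (hx : x < 1) :
    IntervalIntegrable (fun s => log (1 - s) / s) volume 0 x := by
  have hcont : ContinuousOn (dslope (fun s => log (1 - s)) 0) (uIcc 0 x) := by
    intro s hs
    have hs1 : 1 - s ≠ 0 := (by linarith [hs.2, max_lt one_pos hx] : (0 : ℝ) < 1 - s).ne'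
    rcases eq_or_ne s 0 with rfl | hs0
    · exact (continuousAt_dslope_same.mpr
        ((differentiableAt_id.const_sub 1).log hs1)).continuousWithinAt
    · exact ((continuousAt_dslope_of_ne hs0).mpr
        ((continuousAt_id.const_sub 1).log hs1)).continuousWithinAt
  refine hcont.intervalIntegrable.congr_uIoo fun s hs => ?_
  have hs0 : s ≠ 0 := fun h => by simp [h, uIoo] at hs; linarith
  simp [dslope_of_ne _ hs0, slope_def_field]

theorem intervalIntegrable_log_one_sub_div (x : ℝ) :
    IntervalIntegrable (fun s => log (1 - s) / s) volume 0 x := by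
  rcases lt_or_ge x 1 with hx | hx
  · exact intervalIntegrable_log_one_sub_div_of_lt hx
  refine (intervalIntegrable_log_one_sub_div_of_lt (x := 1 / 2) (by norm_num)).trans ?_
  have hlog : IntervalIntegrable (fun s => log (1 - s)) volume (1 / 2) x := by
    simpa using (intervalIntegrable_log' (a := 1 - 1 / 2) (b := 1 - x)).comp_sub_left 1
  have hinv : ContinuousOn (fun s : ℝ => s⁻¹) (uIcc (1 / 2) x) :=
    continuousOn_inv₀.mono fun s hs h0 => by
      rw [uIcc_of_le (by linarith)] at hs
      rw [mem_singleton_iff] at h0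
      linarith [hs.1]
  simpa [div_eq_mul_inv] using hlog.mul_continuousOn hinv

theorem hasDerivAt_Li2R {x : ℝ} (hx0 : x ≠ 0) (hx1 : x ≠ 1) :
    HasDerivAt Li2R (-(log (1 - x) / x)) x := by
  have hcont : ContinuousAt (fun s => log (1 - s) / s) x :=
    ((continuousAt_id.const_sub 1).log (sub_ne_zero.mpr hx1.symm)).div continuousAt_id hx0
  have hmeas : StronglyMeasurableAtFilter (fun s => log (1 - s) / s) (nhds x) volume :=
    ((measurable_log.comp (measurable_const.sub measurable_id)).div
      measurable_id).stronglyMeasurable.stronglyMeasurableAtFilter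
  exact (integral_hasDerivAt_right (intervalIntegrable_log_one_sub_div x) hmeas hcont).neg

theorem HasDerivAt.Li2R {f : ℝ → ℝ} {f' x : ℝ} (hf : HasDerivAt f f' x) (h0 : f x ≠ 0)
    (h1 : f x ≠ 1) : HasDerivAt (fun t => Li2R (f t)) (-(Real.log (1 - f x) / f x) * f') x :=
  (hasDerivAt_Li2R h0 h1).comp x hf

end Li2R

section Li11

open Finset

theorem Real.hasSum_pow_div_natCast {x : ℝ} (h : |x| < 1) :
    HasSum (fun n : ℕ => x ^ n / n) (-log (1 - x)) := by
  rw [← hasSum_nat_add_iff' 1]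
  simpa using hasSum_pow_div_log_of_abs_lt_one h

noncomputable def li11Term (t z : ℝ) (p : ℕ × ℕ) : ℝ :=
  if 0 < p.1 ∧ p.1 < p.2 then t ^ p.1 * z ^ p.2 / ((p.1 : ℝ) * (p.2 : ℝ)) else 0

theorem summable_li11Term {t z : ℝ} (ht : |t| < 1) (hz : |z| < 1) :
    Summable (li11Term t z) := by
  refine .of_norm_bounded (g := fun p : ℕ × ℕ => |t| ^ p.1 * |z| ^ p.2)
    ((summable_geometric_of_lt_one (abs_nonneg t) ht).mul_of_nonneg
      (summable_geometric_of_lt_one (abs_nonneg z) hz) (fun _ => by positivity)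
      (fun _ => by positivity)) fun ⟨j, k⟩ => ?_
  unfold li11Term
  split_ifs with hjk
  · have hjk1 : (1 : ℝ) ≤ j * k := by
      exact_mod_cast Nat.one_le_iff_ne_zero.mpr
        (Nat.mul_ne_zero hjk.1.ne' (hjk.1.trans hjk.2).ne')
    rw [norm_div, norm_mul, norm_pow, norm_pow, Real.norm_eq_abs, Real.norm_eq_abs,
      Real.norm_of_nonneg (by positivity)]
    exact div_le_self (by positivity) hjk1
  · simp only [norm_zero]
    positivity

/-- The `j = 0` term vanishes because `x / 0 = 0`; the same holds for the derivative
`j * t ^ (j - 1) / j` below. -/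
noncomputable def logSeriesTrunc (k : ℕ) (t : ℝ) : ℝ := ∑ j ∈ range k, t ^ j / j

@[simp]
theorem logSeriesTrunc_zero_right (k : ℕ) : logSeriesTrunc k 0 = 0 :=
  sum_eq_zero fun j _ => by rcases eq_or_ne j 0 with rfl | hj <;> simp [*]

theorem Li11_eq_tsum_logSeriesTrunc {t z : ℝ} (ht : |t| < 1) (hz : |z| < 1) :
    Li11 t z = ∑' k : ℕ, z ^ k / k * logSeriesTrunc k t := by
  have hs := summable_li11Term ht hz
  change ∑' p, li11Term t z p = _
  rw [hs.tsum_prod, ← Summable.tsum_comm (f := fun j k => li11Term t z (j, k)) hs]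
  refine tsum_congr fun k => ?_
  rw [tsum_eq_sum (s := range k), logSeriesTrunc, mul_sum]
  · refine sum_congr rfl fun j hj => ?_
    rcases Nat.eq_zero_or_pos j with rfl | hj0
    · simp [li11Term]
    · rw [li11Term, if_pos ⟨hj0, mem_range.mp hj⟩]
      ring
  · intro j hj
    rw [li11Term, if_neg fun h => hj (mem_range.mpr h.2)]

theorem hasDerivAt_logSeriesTrunc (k : ℕ) (t : ℝ) :
    HasDerivAt (logSeriesTrunc k) (∑ j ∈ range k, j * t ^ (j - 1) / j) t := by
  unfold logSeriesTrunc
  exact HasDerivAt.fun_sum fun j _ => (hasDerivAt_pow j t).div_const _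

theorem abs_sum_range_natCast_mul_pow_div_le {t : ℝ} (ht : |t| ≤ 1) (k : ℕ) :
    |∑ j ∈ range k, j * t ^ (j - 1) / j| ≤ k := by
  have hterm : ∀ j ∈ range k, |(j : ℝ) * t ^ (j - 1) / j| ≤ 1 := fun j _ => by
    rcases eq_or_ne j 0 with rfl | hj
    · simp
    · rw [mul_div_cancel_left₀ _ (Nat.cast_ne_zero.mpr hj), abs_pow]
      exact pow_le_one₀ (abs_nonneg t) ht
  refine (abs_sum_le_sum_abs _ _).trans ?_
  simpa using sum_le_card_nsmul (range k) _ 1 hterm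

theorem one_sub_mul_mul_sum_range_natCast_mul_pow_div (y : ℝ) (k : ℕ) :
    (1 - y) * (y * ∑ j ∈ range (k + 1), j * y ^ (j - 1) / j) = y - y ^ (k + 1) := by
  induction k with
  | zero => simp
  | succ k ih =>
    rw [sum_range_succ, mul_add, mul_add, ih, Nat.add_sub_cancel]
    field_simp
    ring

theorem hasDerivAt_Li11_tsum {y z : ℝ} (hy : |y| < 1) (hz : |z| < 1) :
    HasDerivAt (fun t => Li11 t z)
      (∑' k : ℕ, z ^ k / k * ∑ j ∈ range k, j * y ^ (j - 1) / j) y := by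
  have hmem : ∀ {t : ℝ}, |t| < 1 → t ∈ Set.Ioo (-1) 1 := fun ht => abs_lt.mp ht
  have hbound : ∀ (k : ℕ), ∀ t ∈ Set.Ioo (-1 : ℝ) 1,
      ‖z ^ k / k * ∑ j ∈ range k, j * t ^ (j - 1) / j‖ ≤ |z| ^ k := by
    intro k t ht
    rw [Real.norm_eq_abs, abs_mul, abs_div, abs_pow, Nat.abs_cast]
    calc |z| ^ k / k * |∑ j ∈ range k, j * t ^ (j - 1) / j|
        ≤ |z| ^ k / k * k :=
          mul_le_mul_of_nonneg_left
            (abs_sum_range_natCast_mul_pow_div_le (abs_lt.mpr ht).le k) (by positivity)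
      _ ≤ |z| ^ k := by
        rcases eq_or_ne k 0 with rfl | hk
        · simp
        · rw [div_mul_cancel₀ _ (Nat.cast_ne_zero.mpr hk)]
  have hsum := hasDerivAt_tsum_of_isPreconnected
    (g := fun k t => z ^ k / k * logSeriesTrunc k t)
    (summable_geometric_of_lt_one (abs_nonneg z) hz) isOpen_Ioo isPreconnected_Ioo
    (fun k t _ => (hasDerivAt_logSeriesTrunc k t).const_mul _) hbound (hmem (t := 0) (by simp))
    (by simp) (hmem hy)
  refine hsum.congr_of_eventuallyEq ?_
  filter_upwards [isOpen_Ioo.mem_nhds (hmem hy)] with t ht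
  exact Li11_eq_tsum_logSeriesTrunc (abs_lt.mpr ht) hz

theorem hasDerivAt_Li11 {y z : ℝ} (hy0 : y ≠ 0) (hy : |y| < 1) (hz : |z| < 1) :
    HasDerivAt (fun t => Li11 t z) ((log (1 - y * z) - y * log (1 - z)) / (y * (1 - y))) y := by
  have hyz : |y * z| < 1 := by
    rw [abs_mul]
    exact mul_lt_one_of_nonneg_of_lt_one_left (abs_nonneg y) hy hz.le
  have hy1 : 1 - y ≠ 0 := sub_ne_zero.mpr (abs_lt.mp hy).2.ne'
  have hs : HasSum (fun k : ℕ => z ^ k / k * (∑ j ∈ range k, j * y ^ (j - 1) / j) * (y * (1 - y)))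
      (log (1 - y * z) - y * log (1 - z)) := by
    have h := ((hasSum_pow_div_natCast hz).mul_left y).sub (hasSum_pow_div_natCast hyz)
    rw [show y * -log (1 - z) - -log (1 - y * z) = log (1 - y * z) - y * log (1 - z) by ring] at h
    refine h.congr_fun fun k => ?_
    rcases k with _ | k
    · simp
    · calc _ = z ^ (k + 1) / (k + 1 : ℕ) * ((1 - y) * (y * ∑ j ∈ range (k + 1),
              j * y ^ (j - 1) / j)) := by ring
        _ = _ := by rw [one_sub_mul_mul_sum_range_natCast_mul_pow_div]; ring
  refine (hasDerivAt_Li11_tsum hy hz).congr_deriv ?_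
  rw [eq_div_iff (mul_ne_zero hy0 hy1), ← hs.tsum_eq, tsum_mul_right]

end Li11

theorem hasDerivAt_Li2R_log_combination {y z : ℝ} (hy0 : 0 < y) (hy1 : y < 1) (hz0 : 0 < z)
    (hz1 : z < 1) :
    HasDerivAt (fun t => Li2R (1 - t * z) - Li2R (t / (t - 1)) + Li2R ((1 - t * z) / (z * (1 - t)))
        + Real.log (t * (1 - z) / (t - 1)) * Real.log (1 - t * z)
        + Real.log (1 - t) * Real.log (t * z))
      (log (1 - y * z) / (y * (1 - y)) - (log y + log (1 - z)) / (1 - y)) y := by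
  have h1y : 0 < 1 - y := by linarith
  have h1z : 0 < 1 - z := by linarith
  have h1yz : 0 < 1 - y * z := by nlinarith
  have hy1' : y - 1 ≠ 0 := by linarith
  have hz1y : 0 < z * (1 - y) := by positivity
  have hid : HasDerivAt (fun t : ℝ => t) 1 y := hasDerivAt_id' y
  have dA := (hid.mul_const z).const_sub 1
  have dB := hid.fun_div (hid.sub_const 1) hy1'
  have dC := dA.fun_div ((hid.const_sub 1).const_mul z) hz1y.ne'
  have dD := (hid.mul_const (1 - z)).fun_div (hid.sub_const 1) hy1'
  have hderiv := ((((dA.Li2R (by simpa using h1yz.ne') (by simp [hy0.ne', hz0.ne'])).sub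
    (dB.Li2R (div_ne_zero hy0.ne' hy1') (by rw [Ne, div_eq_one_iff_eq hy1']; linarith))).add
    (dC.Li2R (div_ne_zero h1yz.ne' hz1y.ne')
      (by rw [Ne, div_eq_one_iff_eq hz1y.ne']; nlinarith))).add
    ((dD.log (by simp [hy0.ne', h1z.ne', hy1'])).mul (dA.log (by simpa using h1yz.ne')))).add
    (((hid.const_sub 1).log h1y.ne').mul ((hid.mul_const z).log (by positivity)))
  have hlogA : log (1 - (1 - y * z)) = log y + log z := by
    rw [sub_sub_cancel, log_mul hy0.ne' hz0.ne']
  have hlogB : log (1 - y / (y - 1)) = -log (1 - y) := by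
    rw [show 1 - y / (y - 1) = (1 - y)⁻¹ by field_simp; ring, log_inv]
  have hlogC : log (1 - (1 - y * z) / (z * (1 - y))) = log (1 - z) - log z - log (1 - y) := by
    rw [show 1 - (1 - y * z) / (z * (1 - y)) = -((1 - z) / (z * (1 - y))) by field_simp; ring,
      log_neg_eq_log, log_div h1z.ne' hz1y.ne', log_mul hz0.ne' h1y.ne']
    ring
  have hlogD : log (y * (1 - z) / (y - 1)) = log y + log (1 - z) - log (1 - y) := by
    rw [show y * (1 - z) / (y - 1) = -(y * (1 - z) / (1 - y)) by field_simp; ring,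
      log_neg_eq_log, log_div (by positivity) h1y.ne', log_mul hy0.ne' h1z.ne']
  refine hderiv.congr_deriv ?_
  simp only [hlogA, hlogB, hlogC, hlogD, log_mul hy0.ne' hz0.ne']
  field_simp
  ring

theorem hasDerivAt_Li11_sub_Li2R_one_sub {y z : ℝ} (hy0 : 0 < y) (hy1 : y < 1) (hz0 : 0 < z)
    (hz1 : z < 1) :
    HasDerivAt (fun t => Li11 t z - Li2R (1 - t))
      (log (1 - y * z) / (y * (1 - y)) - (log y + log (1 - z)) / (1 - y)) y := by
  have h1y : 1 - y ≠ 0 := by linarith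
  refine ((hasDerivAt_Li11 hy0.ne' (abs_lt.mpr ⟨by linarith, hy1⟩)
    (abs_lt.mpr ⟨by linarith, hz1⟩)).sub
    (((hasDerivAt_id' y).const_sub 1).Li2R h1y (by simpa using hy0.ne'))).congr_deriv ?_
  rw [sub_sub_cancel]
  field_simp
  ring

/-- for `0<y<1`, `0<z<1`, the `y`-derivatives of
`Li₂(1-yz) - Li₂(y/(y-1)) + Li₂((1-yz)/(z(1-y))) + log(y(1-z)/(y-1)) log(1-yz)
 + log(1-y) log(yz)` and of `Li_{1,1}(y,z) - Li₂(1-y)` agree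
(`Real.log` of a negative argument is the log of its absolute value). -/
theorem deriv_g_eq_deriv_Li11 (y z : ℝ) (hy0 : 0 < y) (hy1 : y < 1)
    (hz0 : 0 < z) (hz1 : z < 1) :
    deriv (fun t => Li2R (1 - t * z) - Li2R (t / (t - 1)) + Li2R ((1 - t * z) / (z * (1 - t)))
        + Real.log (t * (1 - z) / (t - 1)) * Real.log (1 - t * z)
        + Real.log (1 - t) * Real.log (t * z)) y
      = deriv (fun t => Li11 t z - Li2R (1 - t)) y := by
  rw [(hasDerivAt_Li2R_log_combination hy0 hy1 hz0 hz1).deriv,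
    (hasDerivAt_Li11_sub_Li2R_one_sub hy0 hy1 hz0 hz1).deriv]
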